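/- arXiv:1305.3567 — 2 statements merged into one kernel-verified Lean document; each statement's English description precedes it below -/
import Mathlib

section
/- Let A ∈ GL(3,Z) be hyperbolic with splitting R^3 = E^s ⊕ E^u where dim E^u = 1, and let π^s, π^u denote the projections along E^s and E^u respectively. Let D ⊆ R^3 be a set with the local product property: there exists δ > 0 such that whenever x, y ∈ D and ‖π^s(x−y)‖ ≤ δ and ‖π^u(x−y)‖ ≤ δ, the point (x + E^s) ∩ (y + E^u) belongs to D. Then for every ε ≤ δ: if x, y ∈ D are n-ε-related (there exist x = x_0, x_1, …, x_n = y in D with ‖π^s(x_{i+1} − x_i)‖ ≤ ε and ‖π^u(x_{i+1} − x_i)‖ ≤ ε for all i), then (x + E^s) ∩ (y + E^u) ∈ D. -/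
/-- Let `ℝ³ = E^s ⊕ E^u` with `dim E^u = 1`, with projections
`π^s` (onto `E^u` along `E^s`) and `π^u` (onto `E^s` along `E^u`). If `D` has the local
product property with constant `δ` (whenever `x, y ∈ D` are `δ`-close in both
projections, the point `(x + E^s) ∩ (y + E^u)` lies in `D`), then for any `ε ≤ δ`, any
two points of `D` that are `n`-`ε`-related have their product point
`(x + E^s) ∩ (y + E^u)` in `D`. -/
theorem chain_local_product (Es Eu : Submodule ℝ (Fin 3 → ℝ))
    (hcompl : IsCompl Es Eu) (hEu1 : Module.finrank ℝ Eu = 1)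
    (πs πu : (Fin 3 → ℝ) →ₗ[ℝ] (Fin 3 → ℝ))
    (hπs : ∀ v, πs v ∈ Eu ∧ v - πs v ∈ Es)
    (hπu : ∀ v, πu v ∈ Es ∧ v - πu v ∈ Eu)
    (D : Set (Fin 3 → ℝ)) (δ : ℝ) (hδ : 0 < δ)
    (hD : ∀ x ∈ D, ∀ y ∈ D, ‖πs (x - y)‖ ≤ δ → ‖πu (x - y)‖ ≤ δ →
      ∀ z, z - x ∈ Es → z - y ∈ Eu → z ∈ D)
    (ε : ℝ) (hε : ε ≤ δ)
    (x y : Fin 3 → ℝ) (hx : x ∈ D) (hy : y ∈ D)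
    (n : ℕ) (c : ℕ → Fin 3 → ℝ) (hc0 : c 0 = x) (hcn : c n = y)
    (hcD : ∀ i ≤ n, c i ∈ D)
    (hs : ∀ i < n, ‖πs (c (i + 1) - c i)‖ ≤ ε)
    (hu : ∀ i < n, ‖πu (c (i + 1) - c i)‖ ≤ ε) :
    ∀ z, z - x ∈ Es → z - y ∈ Eu → z ∈ D := by
  -- basic consequences of the splitting
  have hdisj : ∀ v, v ∈ Es → v ∈ Eu → v = 0 := fun v hv hv' =>
    Submodule.disjoint_def.mp hcompl.disjoint v hv hv'
  have hsum : ∀ v, πs v + πu v = v := by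
    intro v
    have h1 : v - πs v - πu v ∈ Es := Es.sub_mem (hπs v).2 (hπu v).1
    have h2 : v - πs v - πu v ∈ Eu := by
      have h := Eu.sub_mem (hπu v).2 (hπs v).1
      have e : v - πu v - πs v = v - πs v - πu v := by abel
      rwa [e] at h
    have h0 := hdisj _ h1 h2
    have h3 : v - πs v = πu v := by
      have := sub_eq_zero.mp h0
      exact this
    rw [← h3]; abel
  have hsEs : ∀ v ∈ Es, πs v = 0 := by
    intro v hv
    refine hdisj _ ?_ (hπs v).1
    have h : v - (v - πs v) ∈ Es := Es.sub_mem hv (hπs v).2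
    simpa using h
  have hsEu : ∀ v ∈ Eu, πs v = v := by
    intro v hv
    have h0 : v - πs v = 0 := hdisj _ (hπs v).2 (Eu.sub_mem hv (hπs v).1)
    exact (sub_eq_zero.mp h0).symm
  have huEs : ∀ v ∈ Es, πu v = v := by
    intro v hv
    have h0 : v - πu v = 0 := hdisj _ (Es.sub_mem hv (hπu v).1) (hπu v).2
    exact (sub_eq_zero.mp h0).symm
  have huEu : ∀ v ∈ Eu, πu v = 0 := by
    intro v hv
    refine hdisj _ (hπu v).1 ?_
    have h : v - (v - πu v) ∈ Eu := Eu.sub_mem hv (hπu v).2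
    simpa using h
  have hss : ∀ v, πs (πs v) = πs v := fun v => hsEu _ (hπs v).1
  have hsu : ∀ v, πs (πu v) = 0 := fun v => hsEs _ (hπu v).1
  have hus : ∀ v, πu (πs v) = 0 := fun v => huEu _ (hπs v).1
  have huu : ∀ v, πu (πu v) = πu v := fun v => huEs _ (hπu v).1
  -- key induction: the product point of the endpoints of any chain lies in D
  have key : ∀ m (c : ℕ → Fin 3 → ℝ), (∀ i ≤ m, c i ∈ D) →
      (∀ i < m, ‖πs (c (i + 1) - c i)‖ ≤ ε) →
      (∀ i < m, ‖πu (c (i + 1) - c i)‖ ≤ ε) →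
      πs (c 0) + πu (c m) ∈ D := by
    intro m
    induction m with
    | zero =>
      intro c hcD _ _
      rw [hsum]
      exact hcD 0 le_rfl
    | succ n ih =>
      intro c hcD hs hu
      set c' : ℕ → Fin 3 → ℝ := fun i => πs (c i) + πu (c (i + 1)) with hc'
      have hc'D : ∀ i ≤ n, c' i ∈ D := by
        intro i hi
        have hsb : ‖πs (c i - c (i + 1))‖ ≤ δ := by
          rw [← neg_sub, map_neg, norm_neg]
          exact (hs i (by omega)).trans hε
        have hub : ‖πu (c i - c (i + 1))‖ ≤ δ := by
          rw [← neg_sub, map_neg, norm_neg]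
          exact (hu i (by omega)).trans hε
        refine hD (c i) (hcD i (by omega)) (c (i + 1)) (hcD (i + 1) (by omega))
          hsb hub (c' i) ?_ ?_
        · have e : c' i - c i = πu (c (i + 1)) - (c i - πs (c i)) := by
            simp only [hc']; abel
          rw [e]
          exact Es.sub_mem (hπu _).1 (hπs _).2
        · have e : c' i - c (i + 1) = πs (c i) - (c (i + 1) - πu (c (i + 1))) := by
            simp only [hc']; abel
          rw [e]
          exact Eu.sub_mem (hπs _).1 (hπu _).2
      have hs' : ∀ i < n, ‖πs (c' (i + 1) - c' i)‖ ≤ ε := by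
        intro i hi
        have e : πs (c' (i + 1) - c' i) = πs (c (i + 1) - c i) := by
          simp only [hc', map_sub, map_add, hss, hsu, hus, huu, add_zero, zero_add]
        rw [e]
        exact hs i (by omega)
      have hu' : ∀ i < n, ‖πu (c' (i + 1) - c' i)‖ ≤ ε := by
        intro i hi
        have e : πu (c' (i + 1) - c' i) = πu (c (i + 2) - c (i + 1)) := by
          simp only [hc', map_sub, map_add, hss, hsu, hus, huu, add_zero, zero_add]
        rw [e]
        exact hu (i + 1) (by omega)
      have h := ih c' hc'D hs' hu'
      have e : πs (c' 0) + πu (c' n) = πs (c 0) + πu (c (n + 1)) := by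
        simp only [hc', map_add, hss, hsu, hus, huu, add_zero, zero_add]
      rwa [e] at h
  intro z hzx hzy
  have hz : z = πs x + πu y := by
    have h1 : z - (πs x + πu y) ∈ Es := by
      have e : z - (πs x + πu y) = (z - x) + (x - πs x) - πu y := by abel
      rw [e]
      exact Es.sub_mem (Es.add_mem hzx (hπs x).2) (hπu y).1
    have h2 : z - (πs x + πu y) ∈ Eu := by
      have e : z - (πs x + πu y) = (z - y) + (y - πu y) - πs x := by abel
      rw [e]
      exact Eu.sub_mem (Eu.add_mem hzy (hπu y).2) (hπs x).1
    exact sub_eq_zero.mp (hdisj _ h1 h2)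
  have h := key n c hcD hs hu
  rw [hc0, hcn] at h
  rwa [hz]
end

section
/- Let f : M → M be a diffeomorphism of a compact surface, Λ a compact hyperbolic invariant set with Ω(f|_Λ) = Λ, and suppose Λ_1 (the union of nontrivial connected components of Λ) is a disjoint union of an attractor Λ_1^s and a repeller Λ_1^u. Then Λ_0 = Λ \ Λ_1 is compact, i.e., no sequence in Λ_0 can accumulate on Λ_1. -/
open Function Set
open scoped Manifold

variable {E : Type*} [NormedAddCommGroup E] [NormedSpace ℝ E]
  {H : Type*} [TopologicalSpace H]
  {M : Type*} [MetricSpace M] [ChartedSpace H M]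

/-- Iteration indexed by `ℤ`, using a map and its inverse. -/
def zIter (f finv : M → M) : ℤ → M → M
  | Int.ofNat n => f^[n]
  | Int.negSucc n => finv^[n + 1]

/-- Local stable set of size `ε`. -/
def localStable (f : M → M) (ε : ℝ) (x : M) : Set M :=
  {y | ∀ n : ℕ, dist (f^[n] x) (f^[n] y) < ε}

/-- Local unstable set of size `ε` (via the inverse map). -/
def localUnstable (finv : M → M) (ε : ℝ) (x : M) : Set M :=
  {y | ∀ n : ℕ, dist (finv^[n] x) (finv^[n] y) < ε}

/-- Global stable manifold of `x`. -/
def globalStable (f : M → M) (x : M) : Set M :=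
  {y | Filter.Tendsto (fun n : ℕ => dist (f^[n] x) (f^[n] y)) Filter.atTop (nhds 0)}

/-- Global unstable manifold of `x` (via the inverse map). -/
def globalUnstable (finv : M → M) (x : M) : Set M :=
  {y | Filter.Tendsto (fun n : ℕ => dist (finv^[n] x) (finv^[n] y)) Filter.atTop (nhds 0)}

/-- A set `Λ` has local product structure: nearby points of `Λ` have the
(unique) intersection of their local stable/unstable sets inside `Λ`. -/
def LocalProductStructure (f finv : M → M) (Λ : Set M) : Prop :=
  ∃ ε > (0 : ℝ), ∃ δ > (0 : ℝ), ∀ x ∈ Λ, ∀ y ∈ Λ, dist x y < δ →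
    localStable f ε x ∩ localUnstable finv ε y ⊆ Λ

/-- A set `Λ` is locally maximal (isolated) for `f`. -/
def IsLocallyMaximal (f finv : M → M) (Λ : Set M) : Prop :=
  ∃ V : Set M, IsOpen V ∧ Λ ⊆ V ∧ Λ = ⋂ n : ℤ, zIter f finv n '' V

/-- `Λ` is a compact invariant hyperbolic set for `f`: the tangent bundle over `Λ`
splits into a `Df`-invariant contracting and expanding directions. -/
def IsHyperbolicSet (I : ModelWithCorners ℝ E H) (f : M → M) (Λ : Set M) : Prop :=
  IsCompact Λ ∧ f '' Λ = Λ ∧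
  ∃ (Es Eu : ∀ x : M, Submodule ℝ (TangentSpace I x)) (C lam : ℝ),
    0 < C ∧ 0 < lam ∧ lam < 1 ∧
    (∀ x ∈ Λ, IsCompl (Es x) (Eu x)) ∧
    (∀ x ∈ Λ, (Es x).map (mfderiv I I f x : TangentSpace I x →ₗ[ℝ] TangentSpace I (f x))
        ≤ Es (f x)) ∧
    (∀ x ∈ Λ, (Eu x).map (mfderiv I I f x : TangentSpace I x →ₗ[ℝ] TangentSpace I (f x))
        ≤ Eu (f x)) ∧
    (∀ x ∈ Λ, ∀ n : ℕ, ∀ v ∈ Es x, @Norm.norm E _ (mfderiv I I f^[n] x v) ≤ C * lam ^ n * @Norm.norm E _ v) ∧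
    (∀ x ∈ Λ, ∀ n : ℕ, ∀ v ∈ Eu x, @Norm.norm E _ v ≤ C * lam ^ n * @Norm.norm E _ (mfderiv I I f^[n] x v))

/-- Every point of `Λ` is nonwandering for `f` restricted to `Λ`. -/
def NonwanderingOnRestriction (f : M → M) (Λ : Set M) : Prop :=
  ∀ x ∈ Λ, ∀ U : Set M, IsOpen U → x ∈ U →
    ∃ n : ℕ, 0 < n ∧ (f^[n] '' (U ∩ Λ) ∩ (U ∩ Λ)).Nonempty

/-- The set of points of `Λ` whose connected component in `Λ` is a singleton. -/
def singletonPart (Λ : Set M) : Set M :=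
  {x ∈ Λ | connectedComponentIn Λ x = {x}}

/-- The union of the nontrivial connected components of `Λ`. -/
def nontrivialPart (Λ : Set M) : Set M :=
  Λ \ singletonPart Λ

/-- The points of `S` whose global unstable manifold is contained in `S`. -/
def unstableSaturatedPart (finv : M → M) (S : Set M) : Set M :=
  {x ∈ S | globalUnstable finv x ⊆ S}

/-- The points of `S` whose global stable manifold is contained in `S`. -/
def stableSaturatedPart (f : M → M) (S : Set M) : Set M :=
  {x ∈ S | globalStable f x ⊆ S}

/-!
A point of `Λ` lying in the trapping region `U` of the attractor is nonwandering, so it returns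
near itself at arbitrarily large times `m`; pulling such a return back by `n ≤ m` steps lands in
`U`, hence `f⁻ⁿ x ∈ closure U` and then `f⁻ⁿ x ∈ f (closure U) ⊆ U` for every `n`. Thus
`Λ ∩ U ⊆ Λ₁ˢ`, and symmetrically `Λ ∩ U' ⊆ Λ₁ᵘ` for the repeller. Hence
`Λ \ Λ₁ = Λ \ (U ∪ U')` is closed in the compact set `Λ`.
-/

namespace NonwanderingOnRestriction

variable {X : Type*} [MetricSpace X] {f finv : X → X} {Λ U : Set X} {x : X}

theorem of_leftInverse (h1 : LeftInverse finv f) (hnw : NonwanderingOnRestriction f Λ) :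
    NonwanderingOnRestriction finv Λ := by
  intro x hx V hV hxV
  obtain ⟨n, hn, _, ⟨z, hz, rfl⟩, hfz⟩ := hnw x hx V hV hxV
  exact ⟨n, hn, z, ⟨f^[n] z, hfz, h1.iterate n z⟩, hz⟩

theorem exists_ge_iterate_mem (hnw : NonwanderingOnRestriction f Λ) (hf : Continuous f)
    (hx : x ∈ Λ) {B : Set X} (hB : IsOpen B) (hxB : x ∈ B) (N : ℕ) :
    ∃ m ≥ N, ∃ z ∈ B ∩ Λ, f^[m] z ∈ B := by
  induction N with
  | zero => exact ⟨0, le_rfl, x, ⟨hxB, hx⟩, hxB⟩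
  | succ N ih =>
    obtain ⟨m, hm, z, ⟨hzB, hzΛ⟩, hmz⟩ := ih
    obtain ⟨k, hk, _, ⟨w, ⟨⟨hwB, _⟩, hwΛ⟩, rfl⟩, ⟨_, hmw⟩, _⟩ :=
      hnw z hzΛ _ (hB.inter ((hf.iterate m).isOpen_preimage B hB)) ⟨hzB, hmz⟩
    refine ⟨m + k, by omega, w, ⟨hwB, hwΛ⟩, ?_⟩
    rwa [iterate_add_apply]

theorem mem_closure_preimage_iterate (hnw : NonwanderingOnRestriction f Λ) (hf : Continuous f)
    (h1 : LeftInverse finv f) (hU : IsOpen U) (hUf : MapsTo f U U) (hx : x ∈ Λ) (hxU : x ∈ U)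
    (n : ℕ) : x ∈ closure (finv^[n] ⁻¹' U) := by
  refine mem_closure_iff.2 fun B hB hxB => ?_
  obtain ⟨m, hm, z, ⟨⟨_, hzU⟩, _⟩, hmz, _⟩ :=
    hnw.exists_ge_iterate_mem hf hx (hB.inter hU) ⟨hxB, hxU⟩ n
  refine ⟨f^[m] z, hmz, ?_⟩
  show finv^[n] (f^[m] z) ∈ U
  rw [← Nat.add_sub_of_le hm, iterate_add_apply, h1.iterate]
  exact hUf.iterate _ hzU

theorem mem_iInter_image_iterate (hnw : NonwanderingOnRestriction f Λ) (hf : Continuous f)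
    (hfinv : Continuous finv) (h1 : LeftInverse finv f) (h2 : RightInverse finv f)
    (hU : IsOpen U) (hUf : f '' closure U ⊆ U) (hx : x ∈ Λ) (hxU : x ∈ U) :
    x ∈ ⋂ n : ℕ, f^[n] '' U := by
  have hUU : MapsTo f U U := fun y hy => hUf (mem_image_of_mem f (subset_closure hy))
  have hcl (n : ℕ) : finv^[n] x ∈ closure U :=
    (hfinv.iterate n).closure_preimage_subset U
      (hnw.mem_closure_preimage_iterate hf h1 hU hUU hx hxU n)
  refine mem_iInter.2 fun n => ⟨finv^[n] x, ?_, h2.iterate n x⟩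
  rw [← h2 (finv^[n] x), ← iterate_succ_apply' finv]
  exact hUf (mem_image_of_mem f (hcl (n + 1)))

end NonwanderingOnRestriction

theorem singletonPart_compact_general
    {M : Type*} [MetricSpace M] [ChartedSpace (EuclideanSpace ℝ (Fin 2)) M]
    (f finv : M → M) (hf : ContMDiff (𝓡 2) (𝓡 2) (⊤ : ℕ∞) f)
    (hfinv : ContMDiff (𝓡 2) (𝓡 2) (⊤ : ℕ∞) finv)
    (h1 : Function.LeftInverse finv f) (h2 : Function.RightInverse finv f)
    (Λ : Set M) (hΛ : IsHyperbolicSet (𝓡 2) f Λ)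
    (hnw : NonwanderingOnRestriction f Λ)
    (Λ₁ Λs Λu : Set M)
    (hunion : Λ₁ = Λs ∪ Λu)
    (hatt : ∃ U : Set M, IsOpen U ∧ Λs ⊆ U ∧ f '' closure U ⊆ U ∧
      Λs = ⋂ n : ℕ, f^[n] '' U)
    (hrep : ∃ U : Set M, IsOpen U ∧ Λu ⊆ U ∧ finv '' closure U ⊆ U ∧
      Λu = ⋂ n : ℕ, finv^[n] '' U) :
    IsCompact (Λ \ Λ₁) := by
  obtain ⟨U, hUo, hΛsU, hUf, rfl⟩ := hatt
  obtain ⟨U', hU'o, hΛuU', hU'f, rfl⟩ := hrep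
  have hcf : Continuous f := hf.continuous
  have hcfinv : Continuous finv := hfinv.continuous
  have hU_sub (x : M) (hx : x ∈ Λ) (hxU : x ∈ U) : x ∈ Λ₁ := hunion ▸ Or.inl
    (hnw.mem_iInter_image_iterate hcf hcfinv h1 h2 hUo hUf hx hxU)
  have hU'_sub (x : M) (hx : x ∈ Λ) (hxU' : x ∈ U') : x ∈ Λ₁ := hunion ▸ Or.inr
    ((hnw.of_leftInverse h1).mem_iInter_image_iterate hcfinv hcf h2 h1 hU'o hU'f hx hxU')
  have hdiff : Λ \ Λ₁ = Λ \ (U ∪ U') := by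
    ext x
    constructor
    · rintro ⟨hx, hx₁⟩
      exact ⟨hx, fun hxU => hxU.elim (hx₁ <| hU_sub x hx ·) (hx₁ <| hU'_sub x hx ·)⟩
    · rintro ⟨hx, hxU⟩
      exact ⟨hx, fun hx₁ => hxU ((union_subset_union hΛsU hΛuU') (hunion ▸ hx₁))⟩
  rw [hdiff]
  exact hΛ.1.diff (hUo.union hU'o)

/-- (part of Lemma 6.9) If `Λ₁` is the disjoint union of an attractor
`Λ₁ˢ` and a repeller `Λ₁ᵘ`, then `Λ₀ = Λ \ Λ₁` is compact: no sequence in `Λ₀`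
accumulates on `Λ₁`. -/
theorem singletonPart_compact
    {M : Type*} [MetricSpace M] [ChartedSpace (EuclideanSpace ℝ (Fin 2)) M]
    [IsManifold (𝓡 2) (⊤ : ℕ∞) M] [CompactSpace M]
    (f finv : M → M) (hf : ContMDiff (𝓡 2) (𝓡 2) (⊤ : ℕ∞) f)
    (hfinv : ContMDiff (𝓡 2) (𝓡 2) (⊤ : ℕ∞) finv)
    (h1 : Function.LeftInverse finv f) (h2 : Function.RightInverse finv f)
    (Λ : Set M) (hΛ : IsHyperbolicSet (𝓡 2) f Λ)
    (hnw : NonwanderingOnRestriction f Λ)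
    (Λ₁ Λs Λu : Set M) (hΛ₁ : Λ₁ = nontrivialPart Λ)
    (hunion : Λ₁ = Λs ∪ Λu) (hdisj : Λs ∩ Λu = ∅)
    (hatt : ∃ U : Set M, IsOpen U ∧ Λs ⊆ U ∧ f '' closure U ⊆ U ∧
      Λs = ⋂ n : ℕ, f^[n] '' U)
    (hrep : ∃ U : Set M, IsOpen U ∧ Λu ⊆ U ∧ finv '' closure U ⊆ U ∧
      Λu = ⋂ n : ℕ, finv^[n] '' U) :
    IsCompact (Λ \ Λ₁) :=
  singletonPart_compact_general f finv hf hfinv h1 h2 Λ hΛ hnw Λ₁ Λs Λu hunion hatt hrep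
end
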